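/- (Type–reward equivalence under reward scaling.) For every α ∈ [0,1], every type θ ∈ [0,1], and every fraction f ∈ [0,1], there exists a type θ' ∈ [0, θ] such that Q̃(r(θ'), f) = α · Q̃(r(θ), f). -/

import Mathlib

open Real MeasureTheory Set

noncomputable def xfun (B F c ρ ν dmax : ℝ) (m : ℕ) (R f : ℝ) : ℝ :=
  dmax * F * B * R / (m * f * (c * B * R + F) + ρ * ν * F)

/-- CDF of the normal distribution N(μs, σs²). -/
noncomputable def normCDF (μs σs : ℝ) (y : ℝ) : ℝ :=
  ∫ t in Set.Iic y, (1 / (Real.sqrt (2 * Real.pi) * σs)) * Real.exp (-(t - μs) ^ 2 / (2 * σs ^ 2))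

noncomputable def Qfun (B F c ρ ν dmax : ℝ) (m : ℕ) (μs σs sa sb : ℝ) (R f : ℝ) : ℝ :=
  (normCDF μs σs (xfun B F c ρ ν dmax m R f) - normCDF μs σs sa) /
    (normCDF μs σs sb - normCDF μs σs sa)

/-- The clamped success probability. -/
noncomputable def Qtilde (B F c ρ ν dmax : ℝ) (m : ℕ) (μs σs sa sb : ℝ) (R f : ℝ) : ℝ :=
  max 0 (min 1 (Qfun B F c ρ ν dmax m μs σs sa sb R f))

/-- Spectral efficiency of a type θ. -/
noncomputable def specEff (γmax θ : ℝ) : ℝ := Real.logb 2 (1 + γmax * θ)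

/-! The map `θ' ↦ Q̃(r(θ'), f)` is continuous on `[0, θ]`: the Gaussian CDF is continuous and
the denominator of `x(R, f)` is positive for `R, f ≥ 0`. It is nonnegative and vanishes at `0`,
since `x(0, f) = 0 < s_a`, so the intermediate value theorem hits `α · Q̃(r(θ), f)`. -/

section IntegralIic

variable {f : ℝ → ℝ}

lemma continuous_integral_Iic (hf : Integrable f) : Continuous fun y ↦ ∫ t in Iic y, f t :=
  continuous_iff_continuousAt.2 fun y ↦
    (hf.integrableOn.continuousOn_Iic_primitive_Iic (a₀ := y + 1)).continuousAt
      (Iic_mem_nhds (lt_add_one y))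

lemma strictMono_integral_Iic (hf : Integrable f) (hpos : ∀ t, 0 < f t) :
    StrictMono fun y ↦ ∫ t in Iic y, f t := by
  intro a b hab
  have hdiff : (∫ t in Iic b, f t) - ∫ t in Iic a, f t = ∫ t in a..b, f t :=
    intervalIntegral.integral_Iic_sub_Iic hf.integrableOn hf.integrableOn
  have hpos : 0 < ∫ t in a..b, f t :=
    intervalIntegral.intervalIntegral_pos_of_pos hf.intervalIntegrable hpos hab
  simp only
  linarith

end IntegralIic

section NormCDF

variable {μs σs : ℝ}

lemma normCDF_eq_integral_gaussianPDFReal (hσ : 0 < σs) (y : ℝ) :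
    normCDF μs σs y = ∫ t in Iic y, ProbabilityTheory.gaussianPDFReal μs (σs ^ 2).toNNReal t := by
  have hvar : ((σs ^ 2).toNNReal : ℝ) = σs ^ 2 := Real.coe_toNNReal _ (sq_nonneg σs)
  have hsqrt : √(2 * π * σs ^ 2) = √(2 * π) * σs := by
    rw [Real.sqrt_mul (by positivity), Real.sqrt_sq hσ.le]
  simp only [normCDF, ProbabilityTheory.gaussianPDFReal, hvar, hsqrt, one_div]

lemma continuous_normCDF (hσ : 0 < σs) : Continuous (normCDF μs σs) := by
  simpa only [funext (normCDF_eq_integral_gaussianPDFReal hσ)] using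
    continuous_integral_Iic (ProbabilityTheory.integrable_gaussianPDFReal _ _)

lemma strictMono_normCDF (hσ : 0 < σs) : StrictMono (normCDF μs σs) := by
  simpa only [funext (normCDF_eq_integral_gaussianPDFReal hσ)] using
    strictMono_integral_Iic (ProbabilityTheory.integrable_gaussianPDFReal _ _)
      fun t ↦ ProbabilityTheory.gaussianPDFReal_pos _ _ t (by simpa using hσ.ne')

end NormCDF

lemma specEff_zero (γmax : ℝ) : specEff γmax 0 = 0 := by
  simp [specEff]

lemma specEff_nonneg {γmax θ : ℝ} (hγ : 0 ≤ γmax) (hθ : 0 ≤ θ) : 0 ≤ specEff γmax θ :=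
  Real.logb_nonneg one_lt_two (le_add_of_nonneg_right (mul_nonneg hγ hθ))

lemma continuousOn_specEff {γmax : ℝ} (hγ : 0 ≤ γmax) : ContinuousOn (specEff γmax) (Ici 0) :=
  ContinuousOn.logb (by fun_prop) fun θ (hθ : 0 ≤ θ) ↦ by positivity

section Model

variable {B F c ρ ν dmax : ℝ} {m : ℕ} {μs σs sa sb : ℝ} {f : ℝ}

lemma xfun_zero_left : xfun B F c ρ ν dmax m 0 f = 0 := by
  simp [xfun]

lemma continuousOn_xfun (hB : 0 < B) (hF : 0 < F) (hc : 0 < c) (hρ : 0 < ρ) (hν : 0 < ν)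
    (hf : 0 ≤ f) : ContinuousOn (fun R ↦ xfun B F c ρ ν dmax m R f) (Ici 0) :=
  ContinuousOn.div (by fun_prop) (by fun_prop) fun R (hR : 0 ≤ R) ↦ by positivity

lemma Qtilde_nonneg (R : ℝ) : 0 ≤ Qtilde B F c ρ ν dmax m μs σs sa sb R f :=
  le_max_left _ _

lemma Qtilde_zero_left (hσ : 0 < σs) (hsa : 0 ≤ sa) (hab : sa ≤ sb) :
    Qtilde B F c ρ ν dmax m μs σs sa sb 0 f = 0 := by
  have hQ : Qfun B F c ρ ν dmax m μs σs sa sb 0 f ≤ 0 := by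
    rw [Qfun, xfun_zero_left]
    exact div_nonpos_of_nonpos_of_nonneg (sub_nonpos.2 ((strictMono_normCDF hσ).monotone hsa))
      (sub_nonneg.2 ((strictMono_normCDF hσ).monotone hab))
  rw [Qtilde, min_eq_right (hQ.trans zero_le_one), max_eq_left hQ]

lemma continuousOn_Qtilde (hB : 0 < B) (hF : 0 < F) (hc : 0 < c) (hρ : 0 < ρ) (hν : 0 < ν)
    (hσ : 0 < σs) (hf : 0 ≤ f) :
    ContinuousOn (fun R ↦ Qtilde B F c ρ ν dmax m μs σs sa sb R f) (Ici 0) := by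
  have hQ : ContinuousOn (fun R ↦ Qfun B F c ρ ν dmax m μs σs sa sb R f) (Ici 0) :=
    (((continuous_normCDF hσ).comp_continuousOn
      (continuousOn_xfun hB hF hc hρ hν hf)).sub continuousOn_const).div_const _
  exact (continuous_const.max (continuous_const.min continuous_id)).comp_continuousOn hQ

end Model

lemma exists_mem_Icc_eq_mul_of_continuousOn {g : ℝ → ℝ} {a b α : ℝ} (hab : a ≤ b)
    (hg : ContinuousOn g (Icc a b)) (ha : g a = 0) (hb : 0 ≤ g b) (hα : α ∈ Icc (0 : ℝ) 1) :
    ∃ c ∈ Icc a b, g c = α * g b :=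
  intermediate_value_Icc hab hg
    ⟨ha ▸ mul_nonneg hα.1 hb, mul_le_of_le_one_left hb hα.2⟩

theorem stmt13_general (B F c ρ ν dmax : ℝ) (m : ℕ)
    (hB : 0 < B) (hF : 0 < F) (hc : 0 < c) (hρ : 0 < ρ) (hν : 0 < ν)
    (μs σs sa sb : ℝ) (hσ : 0 < σs) (hsa : 0 < sa) (hab : sa < sb) (γmax : ℝ) (hγ : 0 < γmax)
    (α θ f : ℝ) (hα : α ∈ Set.Icc (0 : ℝ) 1) (hθ : θ ∈ Set.Icc (0 : ℝ) 1)
    (hf : f ∈ Set.Icc (0 : ℝ) 1) :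
    ∃ θ' ∈ Set.Icc 0 θ,
      Qtilde B F c ρ ν dmax m μs σs sa sb (specEff γmax θ') f =
        α * Qtilde B F c ρ ν dmax m μs σs sa sb (specEff γmax θ) f := by
  have hcont : ContinuousOn (fun t ↦ Qtilde B F c ρ ν dmax m μs σs sa sb (specEff γmax t) f)
      (Icc 0 θ) :=
    (continuousOn_Qtilde hB hF hc hρ hν hσ hf.1).comp
      ((continuousOn_specEff hγ.le).mono Icc_subset_Ici_self)
      fun t ht ↦ specEff_nonneg hγ.le ht.1
  refine exists_mem_Icc_eq_mul_of_continuousOn hθ.1 hcont ?_ (Qtilde_nonneg _) hα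
  rw [specEff_zero, Qtilde_zero_left hσ hsa.le hab.le]

theorem stmt13 (B F c ρ ν dmax : ℝ) (m : ℕ)
    (hB : 0 < B) (hF : 0 < F) (hc : 0 < c) (hρ : 0 < ρ) (hν : 0 < ν) (hd : 0 < dmax)
    (hm : 0 < m) (μs σs sa sb : ℝ) (hσ : 0 < σs) (hsa : 0 < sa) (hab : sa < sb) (γmax : ℝ) (hγ : 0 < γmax)
    (α θ f : ℝ) (hα : α ∈ Set.Icc (0 : ℝ) 1) (hθ : θ ∈ Set.Icc (0 : ℝ) 1)
    (hf : f ∈ Set.Icc (0 : ℝ) 1) :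
    ∃ θ' ∈ Set.Icc 0 θ,
      Qtilde B F c ρ ν dmax m μs σs sa sb (specEff γmax θ') f =
        α * Qtilde B F c ρ ν dmax m μs σs sa sb (specEff γmax θ) f :=
  stmt13_general B F c ρ ν dmax m hB hF hc hρ hν μs σs sa sb hσ hsa hab γmax hγ α θ f hα hθ hf
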